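/- Let p be a prime and let G be the GGS-group over the p-adic tree with constant defining vector e = (1, 1, ..., 1). Then for the second-level vertex u = x_1x_1, the image ψ_u(st_G(L_2)) equals the normal closure ⟨b⁻¹a⟩^G of b⁻¹a in G, which is a proper subgroup of G. -/

import Mathlib

open Equiv

namespace TreeFract

variable {X : Type*}

/-- The automorphism group of the rooted `d`-adic tree with vertex set the free
monoid `List X`: permutations of the vertex set fixing the root and sending
children of a vertex to children of its image (this is exactly incidence
preservation for the rooted tree). -/
def AutT (X : Type*) : Subgroup (Equiv.Perm (List X)) where
  carrier := {g | g [] = [] ∧ ∀ (u : List X) (x : X), ∃ y : X, g (u ++ [x]) = g u ++ [y]}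
  one_mem' := ⟨rfl, fun _ x => ⟨x, rfl⟩⟩
  mul_mem' := by
    rintro f g ⟨hf1, hf2⟩ ⟨hg1, hg2⟩
    refine ⟨?_, fun u x => ?_⟩
    · show f (g []) = []
      rw [hg1, hf1]
    · obtain ⟨y, hy⟩ := hg2 u x
      obtain ⟨z, hz⟩ := hf2 (g u) y
      exact ⟨z, by show f (g (u ++ [x])) = f (g u) ++ [z]; rw [hy, hz]⟩
  inv_mem' := by
    rintro g ⟨hg1, hg2⟩
    have hinj := g.injective
    refine ⟨?_, fun u x => ?_⟩
    · apply hinj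
      show g (g⁻¹ []) = g []
      rw [Equiv.Perm.inv_def, Equiv.apply_symm_apply, hg1]
    · have hne : g⁻¹ (u ++ [x]) ≠ [] := by
        intro h
        have h2 : u ++ [x] = g [] := by
          conv_lhs => rw [← Equiv.apply_symm_apply g (u ++ [x]), ← Equiv.Perm.inv_def, h]
        rw [hg1] at h2
        simp at h2
      obtain ⟨y, hy⟩ : ∃ y, g⁻¹ (u ++ [x]) = (g⁻¹ (u ++ [x])).dropLast ++ [y] :=
        ⟨(g⁻¹ (u ++ [x])).getLast hne, (List.dropLast_append_getLast hne).symm⟩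
      obtain ⟨z, hz⟩ := hg2 ((g⁻¹ (u ++ [x])).dropLast) y
      have happ : g ((g⁻¹ (u ++ [x])).dropLast) ++ [z] = u ++ [x] := by
        rw [← hz, ← hy, Equiv.Perm.inv_def, Equiv.apply_symm_apply]
      have h2 : g ((g⁻¹ (u ++ [x])).dropLast) = u ∧ ([z] : List X) = [x] :=
        List.append_inj' happ rfl
      refine ⟨y, ?_⟩
      rw [hy]
      congr 1
      apply hinj
      rw [Equiv.Perm.inv_def, Equiv.apply_symm_apply, ← Equiv.Perm.inv_def, h2.1]

/-- The underlying function of the section of `g` at the vertex `u`. -/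
def sectFun (g : Equiv.Perm (List X)) (u : List X) : List X → List X :=
  fun v => (g (u ++ v)).drop (g u).length

open scoped Classical in
/-- The section `g_u` of a tree automorphism `g` at a vertex `u`, i.e. the unique
automorphism with `g (u ++ v) = g u ++ g_u v` for all `v`.  (By convention it is
the identity for permutations which are not tree automorphisms.) -/
noncomputable def sect (g : Equiv.Perm (List X)) (u : List X) : Equiv.Perm (List X) :=
  if h : Function.Bijective (sectFun g u) then Equiv.ofBijective _ h else 1

/-- The underlying function of the label of `g` at the vertex `u`. -/
def labelFun (g : Equiv.Perm (List X)) (u : List X) : X → X :=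
  fun x => (g (u ++ [x])).getLastD x

open scoped Classical in
/-- The label `g_(u)` of a tree automorphism `g` at a vertex `u`: the permutation
of `X` with `g (u ++ [x]) = g u ++ [g_(u) x]`.  (By convention it is the identity
for permutations which are not tree automorphisms.) -/
noncomputable def label (g : Equiv.Perm (List X)) (u : List X) : Equiv.Perm X :=
  if h : Function.Bijective (labelFun g u) then Equiv.ofBijective _ h else 1

/-- The stabilizer `st_G(u)` of the vertex `u` in `G`. -/
def stV (G : Subgroup (Equiv.Perm (List X))) (u : List X) : Subgroup (Equiv.Perm (List X)) where
  carrier := {g | g ∈ G ∧ g u = u}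
  one_mem' := ⟨one_mem G, rfl⟩
  mul_mem' := by
    rintro f g ⟨hf, hf2⟩ ⟨hg, hg2⟩
    exact ⟨mul_mem hf hg, by show f (g u) = u; rw [hg2, hf2]⟩
  inv_mem' := by
    rintro g ⟨hg, hg2⟩
    refine ⟨inv_mem hg, ?_⟩
    apply g.injective
    show g (g⁻¹ u) = g u
    rw [Equiv.Perm.inv_def, Equiv.apply_symm_apply, hg2]

/-- The stabilizer `st_G(L_n)` of the `n`-th level in `G`. -/
def stL (G : Subgroup (Equiv.Perm (List X))) (n : ℕ) : Subgroup (Equiv.Perm (List X)) where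
  carrier := {g | g ∈ G ∧ ∀ u : List X, u.length = n → g u = u}
  one_mem' := ⟨one_mem G, fun _ _ => rfl⟩
  mul_mem' := by
    rintro f g ⟨hf, hf2⟩ ⟨hg, hg2⟩
    exact ⟨mul_mem hf hg, fun u hu => by show f (g u) = u; rw [hg2 u hu, hf2 u hu]⟩
  inv_mem' := by
    rintro g ⟨hg, hg2⟩
    refine ⟨inv_mem hg, fun u hu => ?_⟩
    apply g.injective
    show g (g⁻¹ u) = g u
    rw [Equiv.Perm.inv_def, Equiv.apply_symm_apply, hg2 u hu]

/-- `G` is self-similar: sections of elements of `G` lie in `G`. -/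
def SelfSimilar (G : Subgroup (Equiv.Perm (List X))) : Prop :=
  ∀ g ∈ G, ∀ u : List X, sect g u ∈ G

/-- `G` acts transitively on the first level of the tree. -/
def FirstLevelTransitive (G : Subgroup (Equiv.Perm (List X))) : Prop :=
  ∀ x y : X, ∃ g ∈ G, g [x] = [y]

/-- `G` is level transitive: it acts transitively on every level of the tree. -/
def LevelTransitive (G : Subgroup (Equiv.Perm (List X))) : Prop :=
  ∀ (n : ℕ) (u v : List X), u.length = n → v.length = n → ∃ g ∈ G, g u = v

/-- `G` is fractal: `ψ_u(st_G(u)) = G` for every vertex `u`. -/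
def Fractal (G : Subgroup (Equiv.Perm (List X))) : Prop :=
  ∀ u : List X,
    (fun g => sect g u) '' (stV G u : Set (Equiv.Perm (List X))) = (G : Set (Equiv.Perm (List X)))

/-- `G` is strongly fractal: `ψ_x(st_G(L_1)) = G` for every first-level vertex `x`. -/
def StronglyFractal (G : Subgroup (Equiv.Perm (List X))) : Prop :=
  ∀ x : X,
    (fun g => sect g [x]) '' (stL G 1 : Set (Equiv.Perm (List X))) = (G : Set (Equiv.Perm (List X)))

/-- `G` is super strongly fractal: `ψ_u(st_G(L_n)) = G` for every `n` and every `u ∈ L_n`. -/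
def SuperStronglyFractal (G : Subgroup (Equiv.Perm (List X))) : Prop :=
  ∀ (n : ℕ) (u : List X), u.length = n →
    (fun g => sect g u) '' (stL G n : Set (Equiv.Perm (List X))) = (G : Set (Equiv.Perm (List X)))

/-- The normal closure `⟨S⟩^G` of a subset `S ⊆ G` in the subgroup `G`, realized as a
subgroup of the ambient group: the subgroup generated by all `G`-conjugates of `S`. -/
def normalClosureIn (G : Subgroup (Equiv.Perm (List X))) (S : Set (Equiv.Perm (List X))) :
    Subgroup (Equiv.Perm (List X)) :=
  Subgroup.closure {t | ∃ g ∈ G, ∃ s ∈ S, t = g * s * g⁻¹}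

end TreeFract
namespace TreeFract

/-! ### The Hanoi towers generators -/

section Hanoi

variable {d : ℕ}

/-- The underlying function of the automorphism `a_{ij}` of the Hanoi Towers group:
it swaps the first occurrence of `i` or `j` in a word. -/
def hanoiFun (i j : Fin d) : List (Fin d) → List (Fin d)
  | [] => []
  | x :: w => if x = i then j :: w else if x = j then i :: w else x :: hanoiFun i j w

lemma hanoiFun_invol (i j : Fin d) : ∀ w, hanoiFun i j (hanoiFun i j w) = w
  | [] => rfl
  | x :: w => by
    by_cases h1 : x = i
    · subst h1
      by_cases h2 : j = x
      · simp [hanoiFun, h2]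
      · simp [hanoiFun, h2]
    · by_cases h2 : x = j
      · subst h2
        simp [hanoiFun, h1]
      · simp [hanoiFun, h1, h2, hanoiFun_invol i j w]

/-- The automorphism `a_{ij}` of the `d`-adic tree: its label at the root is the
transposition `(x_i x_j)`, its sections at the first-level vertices `x_i` and `x_j`
are trivial and all its other first-level sections equal `a_{ij}` again. -/
def hanoiA (i j : Fin d) : Equiv.Perm (List (Fin d)) :=
  ⟨hanoiFun i j, hanoiFun i j, hanoiFun_invol i j, hanoiFun_invol i j⟩

end Hanoi

/-- The generator `b_i = a_{i,i+1}` (here `i` runs through `0, …, d-2`,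
corresponding to the paper's `b_1, …, b_{d-1}`). -/
def hanoiB (d : ℕ) (i : ℕ) (h : i + 1 < d) : Equiv.Perm (List (Fin d)) :=
  hanoiA ⟨i, Nat.lt_of_succ_lt h⟩ ⟨i + 1, h⟩

/-- The subgroup `G = ⟨b_1, …, b_{d-1}⟩` of the Hanoi Towers group. -/
def hanoiGroup (d : ℕ) : Subgroup (Equiv.Perm (List (Fin d))) :=
  Subgroup.closure {g | ∃ (i : ℕ) (h : i + 1 < d), g = hanoiB d i h}

/-! ### GGS groups (and the rooted automorphism `a`) -/

section GGS

variable {p : ℕ}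

/-- The function adding `m` to the first letter of a word over `ZMod p`. -/
def rotFun (m : ZMod p) : List (ZMod p) → List (ZMod p)
  | [] => []
  | x :: w => (x + m) :: w

/-- The rooted automorphism of the `p`-adic tree whose label at the root is the
`p`-cycle `x ↦ x + m`; for `m = 1` this is the generator `a` of a GGS-group
(identifying `x_i` with `i mod p`). -/
def rotPerm (m : ZMod p) : Equiv.Perm (List (ZMod p)) :=
  ⟨rotFun m, rotFun (-m),
    by intro w; cases w <;> simp [rotFun],
    by intro w; cases w <;> simp [rotFun]⟩

/-- The underlying function of the GGS generator `b` with defining vector `e`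
(the value `e 0` is irrelevant; `e i` for `i ≠ 0` are the coordinates
`e_1, …, e_{p-1}`): `b` fixes the first level, its section at `x_i` is
`a^{e_i}` for `i = 1, …, p-1` and its section at `x_p` (identified with `0`)
is `b` again. -/
def ggsFun (e : ZMod p → ZMod p) : List (ZMod p) → List (ZMod p)
  | [] => []
  | x :: w => if x = 0 then x :: ggsFun e w else x :: rotFun (e x) w

lemma ggsFun_inv (e : ZMod p → ZMod p) : ∀ w, ggsFun (fun i => -(e i)) (ggsFun e w) = w
  | [] => rfl
  | x :: w => by
    by_cases h : x = 0
    · simp only [ggsFun, if_pos h]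
      rw [ggsFun_inv e w]
    · simp only [ggsFun, if_neg h]
      cases w <;> simp [rotFun]

/-- The GGS generator `b` with defining vector `e`, as a tree automorphism. -/
def ggsB (e : ZMod p → ZMod p) : Equiv.Perm (List (ZMod p)) :=
  ⟨ggsFun e, ggsFun (fun i => -(e i)), ggsFun_inv e, by
    intro w
    have h := ggsFun_inv (fun i => -(e i)) w
    simpa using h⟩

end GGS

/-- The GGS-group `G = ⟨a, b⟩` over the `p`-adic tree with defining vector `e`. -/
def ggsGroup (p : ℕ) (e : ZMod p → ZMod p) : Subgroup (Equiv.Perm (List (ZMod p))) :=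
  Subgroup.closure {rotPerm 1, ggsB e}

/-! ### The first Grigorchuk group -/

/-- The three directed generators `b, c, d` (for `k % 3 = 0, 1, 2` respectively) of the
first Grigorchuk group, defined by the mutual recursion
`b = (a, c)`, `c = (a, d)`, `d = (1, b)` (identifying `x_1` with `0` and `x_2` with `1`). -/
def griFun : ℕ → List (ZMod 2) → List (ZMod 2)
  | _, [] => []
  | k, x :: w => if x = 0 then (if k % 3 = 2 then x :: w else x :: rotFun 1 w)
                 else x :: griFun (k + 1) w

lemma griFun_invol : ∀ (w : List (ZMod 2)) (k : ℕ), griFun k (griFun k w) = w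
  | [], _ => rfl
  | x :: w, k => by
    by_cases h : x = 0
    · by_cases h3 : k % 3 = 2
      · simp [griFun, h, h3]
      · simp only [griFun, if_pos h, if_neg h3]
        cases w with
        | nil => rfl
        | cons y v =>
            have hy : y + 1 + 1 = y := by
              rw [add_assoc]
              simp [show (1 : ZMod 2) + 1 = 0 from rfl]
            simp [rotFun, hy]
    · simp only [griFun, if_neg h]
      rw [griFun_invol w (k + 1)]

/-- The generator `b` of the first Grigorchuk group, with sections `(a, c)`. -/
def griB : Equiv.Perm (List (ZMod 2)) :=
  ⟨griFun 0, griFun 0, fun w => griFun_invol w 0, fun w => griFun_invol w 0⟩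

/-- The generator `c` of the first Grigorchuk group, with sections `(a, d)`. -/
def griC : Equiv.Perm (List (ZMod 2)) :=
  ⟨griFun 1, griFun 1, fun w => griFun_invol w 1, fun w => griFun_invol w 1⟩

/-- The generator `d` of the first Grigorchuk group, with sections `(1, b)`. -/
def griD : Equiv.Perm (List (ZMod 2)) :=
  ⟨griFun 2, griFun 2, fun w => griFun_invol w 2, fun w => griFun_invol w 2⟩

/-- The first Grigorchuk group `𝒢 = ⟨a, b, c, d⟩` acting on the binary tree. -/
def grigorchukGroup : Subgroup (Equiv.Perm (List (ZMod 2))) :=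
  Subgroup.closure {rotPerm 1, griB, griC, griD}

end TreeFract

/-!
Every element `g` of `G = ⟨a, b⟩` acts on the first two levels by shifts of `ZMod p`: by
`x ↦ x + r` at the root and by `y ↦ y + c_x` below `x`. Hence `σ(g) = r - ∑ₓ c_x` is additive,
with `σ(a) = σ(b) = 1` because the shifts of `b` below the first level add up to `p - 1`.
Induction on words gives `σ(g_x) = -∑_y c_y` for every first-level section, and
`ker σ = ⟨ab⁻¹⟩^G` because modulo `⟨ab⁻¹⟩^G` every element is a power of `a`, and `a ^ p = 1`.

If `h ∈ st_G(L_2)` all its shifts vanish, so `σ(h_1) = 0`, and the root shift of `h_1`, which is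
`c_1(h) = 0`, vanishes too; thus the shifts `c_y(h_1)` add up to `0` and `σ(h_{11}) = 0`.
Conversely `liftA = aba⁻¹` and `liftB = b liftA b⁻¹` fix `x_1x_1` with sections `a` and `b`
there, so `G` normalises `ψ_{11}(st_G(L_2))`, which contains `ab⁻¹ = ψ_{11}(liftA liftB⁻¹)`.
Finally `σ(a) = 1` shows that `a ∉ ⟨ab⁻¹⟩^G`.
-/

namespace TreeFract

section TreeAutomorphism

variable {X : Type*} {f g : Equiv.Perm (List X)}

lemma exists_apply_singleton (hg : g ∈ AutT X) (x : X) : ∃ y, g [x] = [y] := by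
  simpa [hg.1] using hg.2 [] x

lemma length_apply_of_mem_autT (hg : g ∈ AutT X) (u : List X) : (g u).length = u.length := by
  induction u using List.reverseRecOn with
  | nil => rw [hg.1]
  | append_singleton u x ih =>
    obtain ⟨y, hy⟩ := hg.2 u x
    simp [hy, ih]

lemma exists_apply_append (hg : g ∈ AutT X) (u v : List X) : ∃ t, g (u ++ v) = g u ++ t := by
  induction v using List.reverseRecOn with
  | nil => exact ⟨[], by simp⟩
  | append_singleton v x ih =>
    obtain ⟨t, ht⟩ := ih
    obtain ⟨y, hy⟩ := hg.2 (u ++ v) x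
    exact ⟨t ++ [y], by rw [← List.append_assoc, hy, ht, List.append_assoc]⟩

lemma apply_append_sectFun (hg : g ∈ AutT X) (u v : List X) :
    g (u ++ v) = g u ++ sectFun g u v := by
  obtain ⟨t, ht⟩ := exists_apply_append hg u v
  rw [sectFun, ht, List.drop_left]

lemma sectFun_inv_sectFun (hg : g ∈ AutT X) (u v : List X) :
    sectFun g⁻¹ (g u) (sectFun g u v) = v := by
  rw [sectFun, ← apply_append_sectFun hg u v]
  simp

lemma bijective_sectFun (hg : g ∈ AutT X) (u : List X) : Function.Bijective (sectFun g u) := by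
  refine ⟨Function.LeftInverse.injective (sectFun_inv_sectFun hg u), fun w => ?_⟩
  refine ⟨sectFun g⁻¹ (g u) w, ?_⟩
  simpa using sectFun_inv_sectFun (inv_mem hg) (g u) w

lemma sect_apply (hg : g ∈ AutT X) (u v : List X) :
    sect g u v = (g (u ++ v)).drop (g u).length := by
  rw [sect, dif_pos (bijective_sectFun hg u)]
  rfl

lemma apply_append (hg : g ∈ AutT X) (u v : List X) : g (u ++ v) = g u ++ sect g u v := by
  rw [sect_apply hg]
  exact apply_append_sectFun hg u v

lemma sect_eq_of_apply_append {t : Equiv.Perm (List X)} (hg : g ∈ AutT X) {u : List X}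
    (hu : g u = u) (h : ∀ v, g (u ++ v) = u ++ t v) : sect g u = t :=
  Equiv.ext fun v => by rw [sect_apply hg, h, hu, List.drop_left]

lemma sect_one (u : List X) : sect (1 : Equiv.Perm (List X)) u = 1 :=
  Equiv.ext fun v => by simp [sect_apply (one_mem (AutT X))]

lemma sect_mul (hf : f ∈ AutT X) (hg : g ∈ AutT X) (u : List X) :
    sect (f * g) u = sect f (g u) * sect g u :=
  Equiv.ext fun v => by
    rw [Equiv.Perm.mul_apply, sect_apply (mul_mem hf hg), Equiv.Perm.mul_apply,
      Equiv.Perm.mul_apply, apply_append hg, apply_append hf, List.drop_left]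

lemma sect_inv_eq (hg : g ∈ AutT X) (u : List X) : sect g⁻¹ u = (sect g (g⁻¹ u))⁻¹ := by
  have h := sect_mul hg (inv_mem hg) u
  rw [mul_inv_cancel, sect_one] at h
  exact eq_inv_of_mul_eq_one_right h.symm

lemma sect_inv (hg : g ∈ AutT X) {u : List X} (hu : g u = u) :
    sect g⁻¹ u = (sect g u)⁻¹ := by
  rw [sect_inv_eq hg, Equiv.Perm.inv_eq_iff_eq.mpr hu.symm]

lemma sect_mem_autT (hg : g ∈ AutT X) (u : List X) : sect g u ∈ AutT X := by
  refine ⟨by simp [sect_apply hg], fun v x => ?_⟩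
  obtain ⟨y, hy⟩ := hg.2 (u ++ v) x
  refine ⟨y, ?_⟩
  rw [sect_apply hg, sect_apply hg, ← List.append_assoc, hy, apply_append hg u v,
    List.append_assoc, List.drop_left, List.drop_left]

lemma sect_nil (hg : g ∈ AutT X) : sect g [] = g :=
  Equiv.ext fun v => by simp [sect_apply hg, hg.1]

lemma sect_append (hg : g ∈ AutT X) (u v : List X) : sect g (u ++ v) = sect (sect g u) v := by
  refine Equiv.ext fun w => ?_
  have huv : sect g u (v ++ w) = sect g u v ++ sect g (u ++ v) w := by
    rw [sect_apply hg, ← List.append_assoc, apply_append hg (u ++ v), apply_append hg u,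
      List.append_assoc, List.drop_left, sect_apply hg u v]
  rw [sect_apply (sect_mem_autT hg u), huv, List.drop_left]

end TreeAutomorphism

section Subgroups

variable {X : Type*} {G : Subgroup (Equiv.Perm (List X))}

lemma conj_mem_stL (hG : G ≤ AutT X) {F h : Equiv.Perm (List X)} (hF : F ∈ G) {n : ℕ}
    (hh : h ∈ stL G n) : F * h * F⁻¹ ∈ stL G n := by
  refine ⟨mul_mem (mul_mem hF hh.1) (inv_mem hF), fun u hu => ?_⟩
  have hlen : (F⁻¹ u).length = n := by rw [length_apply_of_mem_autT (inv_mem (hG hF)), hu]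
  rw [Equiv.Perm.mul_apply, Equiv.Perm.mul_apply, hh.2 _ hlen]
  exact F.apply_symm_apply u

/-- `ψ_u(st_G(L_n))` for the level `n = |u|` of `u`. -/
def sectStLImage (G : Subgroup (Equiv.Perm (List X))) (hG : G ≤ AutT X) (u : List X) :
    Subgroup (Equiv.Perm (List X)) where
  carrier := (fun g => sect g u) '' (stL G u.length : Set (Equiv.Perm (List X)))
  one_mem' := ⟨1, one_mem _, sect_one u⟩
  mul_mem' := by
    rintro _ _ ⟨f, hf, rfl⟩ ⟨g, hg, rfl⟩
    exact ⟨f * g, mul_mem hf hg, by simp [sect_mul (hG hf.1) (hG hg.1), hg.2 u rfl]⟩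
  inv_mem' := by
    rintro _ ⟨g, hg, rfl⟩
    exact ⟨g⁻¹, inv_mem hg, sect_inv (hG hg.1) (hg.2 u rfl)⟩

lemma sect_conj_mem_sectStLImage (hG : G ≤ AutT X) {F t : Equiv.Perm (List X)} (hF : F ∈ G)
    {u : List X} (hFu : F u = u) (ht : t ∈ sectStLImage G hG u) :
    sect F u * t * (sect F u)⁻¹ ∈ sectStLImage G hG u := by
  obtain ⟨h, hh, rfl⟩ := ht
  refine ⟨F * h * F⁻¹, conj_mem_stL hG hF hh, ?_⟩
  have hFA := hG hF
  show sect (F * h * F⁻¹) u = _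
  rw [sect_mul (mul_mem hFA (hG hh.1)) (inv_mem hFA), sect_mul hFA (hG hh.1), ← sect_inv hFA hFu,
    Equiv.Perm.inv_eq_iff_eq.mpr hFu.symm, hh.2 u rfl]

lemma sect_mem_normalizer_sectStLImage (hG : G ≤ AutT X) {F : Equiv.Perm (List X)} (hF : F ∈ G)
    {u : List X} (hFu : F u = u) :
    sect F u ∈ Subgroup.normalizer (sectStLImage G hG u : Set (Equiv.Perm (List X))) := by
  refine Subgroup.mem_normalizer_iff.mpr fun t =>
    ⟨sect_conj_mem_sectStLImage hG hF hFu, fun ht => ?_⟩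
  have hFu' : F⁻¹ u = u := Equiv.Perm.inv_eq_iff_eq.mpr hFu.symm
  have h := sect_conj_mem_sectStLImage hG (inv_mem hF) hFu' ht
  simpa [sect_inv (hG hF) hFu, mul_assoc] using h

lemma conj_mem_normalClosureIn {S : Set (Equiv.Perm (List X))} {g n : Equiv.Perm (List X)}
    (hg : g ∈ G) (hn : n ∈ normalClosureIn G S) : g * n * g⁻¹ ∈ normalClosureIn G S := by
  induction hn using Subgroup.closure_induction with
  | mem x hx =>
    obtain ⟨k, hk, s, hs, rfl⟩ := hx
    exact Subgroup.subset_closure ⟨g * k, mul_mem hg hk, s, hs, by group⟩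
  | one => simp [one_mem]
  | mul x y _ _ hx hy => simpa [mul_assoc] using mul_mem hx hy
  | inv x _ hx => simpa [mul_assoc] using inv_mem hx

lemma subset_normalClosureIn (S : Set (Equiv.Perm (List X))) : S ⊆ normalClosureIn G S :=
  fun s hs => Subgroup.subset_closure ⟨1, one_mem G, s, hs, by group⟩

lemma normalClosureIn_le {S : Set (Equiv.Perm (List X))} (hS : S ⊆ G) :
    normalClosureIn G S ≤ G := by
  rw [normalClosureIn, Subgroup.closure_le]
  rintro _ ⟨g, hg, s, hs, rfl⟩
  exact mul_mem (mul_mem hg (hS hs)) (inv_mem hg)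

lemma normalClosureIn_le_of_le_normalizer {S : Set (Equiv.Perm (List X))}
    {K : Subgroup (Equiv.Perm (List X))} (hS : S ⊆ K)
    (hG : G ≤ Subgroup.normalizer (K : Set (Equiv.Perm (List X)))) :
    normalClosureIn G S ≤ K := by
  rw [normalClosureIn, Subgroup.closure_le]
  rintro _ ⟨g, hg, s, hs, rfl⟩
  exact (Subgroup.mem_normalizer_iff.mp (hG hg) s).mp (hS hs)

end Subgroups

section Generators

variable {p : ℕ}

@[simp] lemma rotPerm_nil (m : ZMod p) : rotPerm m [] = [] := rfl

@[simp] lemma rotPerm_cons (m x : ZMod p) (w : List (ZMod p)) :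
    rotPerm m (x :: w) = (x + m) :: w := rfl

@[simp] lemma ggsB_nil (e : ZMod p → ZMod p) : ggsB e [] = [] := rfl

@[simp] lemma ggsB_zero_cons (e : ZMod p → ZMod p) (w : List (ZMod p)) :
    ggsB e (0 :: w) = 0 :: ggsB e w := by
  simp [ggsB, ggsFun]

lemma ggsB_cons_of_ne_zero (e : ZMod p → ZMod p) {x : ZMod p} (hx : x ≠ 0) (w : List (ZMod p)) :
    ggsB e (x :: w) = x :: rotPerm (e x) w := by
  simp [ggsB, ggsFun, hx, rotPerm]

lemma rotPerm_inv (m : ZMod p) : (rotPerm m)⁻¹ = rotPerm (-m) := Equiv.ext fun _ => rfl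

lemma ggsB_inv (e : ZMod p → ZMod p) : (ggsB e)⁻¹ = ggsB (fun x => -e x) :=
  Equiv.ext fun _ => rfl

lemma rotPerm_zero : rotPerm (0 : ZMod p) = 1 := by
  ext (_ | ⟨x, w⟩) <;> simp

lemma rotPerm_mul (m m' : ZMod p) : rotPerm m * rotPerm m' = rotPerm (m + m') := by
  ext (_ | ⟨x, w⟩) <;> simp [add_assoc, add_comm m']

lemma rotPerm_one_pow (n : ℕ) : rotPerm (1 : ZMod p) ^ n = rotPerm (n : ZMod p) := by
  induction n with
  | zero => rw [pow_zero, Nat.cast_zero, rotPerm_zero]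
  | succ n ih => rw [pow_succ, ih, rotPerm_mul, Nat.cast_succ]

lemma rotPerm_one_zpow (k : ℤ) : rotPerm (1 : ZMod p) ^ k = rotPerm (k : ZMod p) := by
  cases k with
  | ofNat n => simpa using rotPerm_one_pow n
  | negSucc n => rw [zpow_negSucc, rotPerm_one_pow, rotPerm_inv, Int.cast_negSucc]

lemma rotPerm_mem_autT (m : ZMod p) : rotPerm m ∈ AutT (ZMod p) := by
  refine ⟨rfl, fun u x => ?_⟩
  cases u with
  | nil => exact ⟨x + m, rfl⟩
  | cons z t => exact ⟨x, rfl⟩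

lemma ggsB_mem_autT (e : ZMod p → ZMod p) : ggsB e ∈ AutT (ZMod p) := by
  refine ⟨rfl, fun u => ?_⟩
  induction u with
  | nil => intro x; by_cases hx : x = 0 <;> simp [hx, ggsB_cons_of_ne_zero]
  | cons z u ih =>
    intro x
    by_cases hz : z = 0
    · obtain ⟨y, hy⟩ := ih x
      exact ⟨y, by simp [hz, hy]⟩
    · cases u with
      | nil => exact ⟨x + e z, by simp [ggsB_cons_of_ne_zero e hz]⟩
      | cons w t => exact ⟨x, by simp [ggsB_cons_of_ne_zero e hz]⟩

lemma rotPerm_one_mem_ggsGroup (e : ZMod p → ZMod p) : rotPerm 1 ∈ ggsGroup p e :=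
  Subgroup.subset_closure (Set.mem_insert _ _)

lemma rotPerm_mem_ggsGroup (e : ZMod p → ZMod p) (m : ZMod p) : rotPerm m ∈ ggsGroup p e := by
  rw [← ZMod.intCast_zmod_cast m, ← rotPerm_one_zpow]
  exact zpow_mem (rotPerm_one_mem_ggsGroup e) _

lemma ggsB_mem_ggsGroup (e : ZMod p → ZMod p) : ggsB e ∈ ggsGroup p e :=
  Subgroup.subset_closure (Set.mem_insert_of_mem _ rfl)

lemma ggsGroup_le_autT (e : ZMod p → ZMod p) : ggsGroup p e ≤ AutT (ZMod p) := by
  rw [ggsGroup, Subgroup.closure_le]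
  rintro g (rfl | rfl)
  exacts [rotPerm_mem_autT 1, ggsB_mem_autT e]

lemma sect_rotPerm (m x : ZMod p) : sect (rotPerm m) [x] = 1 :=
  Equiv.ext fun v => by simp [sect_apply (rotPerm_mem_autT m)]

lemma sect_ggsB_zero (e : ZMod p → ZMod p) : sect (ggsB e) [0] = ggsB e :=
  Equiv.ext fun v => by simp [sect_apply (ggsB_mem_autT e)]

lemma sect_ggsB_of_ne_zero (e : ZMod p → ZMod p) {x : ZMod p} (hx : x ≠ 0) :
    sect (ggsB e) [x] = rotPerm (e x) :=
  Equiv.ext fun v => by simp [sect_apply (ggsB_mem_autT e), ggsB_cons_of_ne_zero e hx]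

lemma sect_singleton_mem_ggsGroup (e : ZMod p → ZMod p) {g : Equiv.Perm (List (ZMod p))}
    (hg : g ∈ ggsGroup p e) (x : ZMod p) : sect g [x] ∈ ggsGroup p e := by
  induction hg using Subgroup.closure_induction generalizing x with
  | mem g hg =>
    obtain rfl | rfl := hg
    · simp [sect_rotPerm, one_mem]
    · by_cases hx : x = 0
      · simpa [hx, sect_ggsB_zero] using ggsB_mem_ggsGroup e
      · simpa [sect_ggsB_of_ne_zero e hx] using rotPerm_mem_ggsGroup e (e x)
  | one => simp [sect_one, one_mem]
  | mul f g hf hg ihf ihg =>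
    obtain ⟨y, hy⟩ := exists_apply_singleton (ggsGroup_le_autT e hg) x
    rw [sect_mul (ggsGroup_le_autT e hf) (ggsGroup_le_autT e hg), hy]
    exact mul_mem (ihf y) (ihg x)
  | inv g hg ihg =>
    obtain ⟨y, hy⟩ := exists_apply_singleton (inv_mem (ggsGroup_le_autT e hg)) x
    rw [sect_inv_eq (ggsGroup_le_autT e hg), hy]
    exact inv_mem (ihg y)

lemma ggsGroup_selfSimilar (e : ZMod p → ZMod p) : SelfSimilar (ggsGroup p e) := by
  intro g hg u
  induction u generalizing g with
  | nil => rwa [sect_nil (ggsGroup_le_autT e hg)]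
  | cons x u ih =>
    rw [← List.singleton_append, sect_append (ggsGroup_le_autT e hg)]
    exact ih _ (sect_singleton_mem_ggsGroup e hg x)

end Generators

section TwoLevelShift

variable {p : ℕ}

/-- The label of `g` at the root, read off as a shift `x ↦ x + rootShift g`. -/
def rootShift (g : Equiv.Perm (List (ZMod p))) : ZMod p := (g [0]).headI

/-- The label of `g` at the first-level vertex `x`, read off as a shift. -/
def childShift (g : Equiv.Perm (List (ZMod p))) (x : ZMod p) : ZMod p := (g [x, 0]).getLastD 0

def IsTwoLevelShift (g : Equiv.Perm (List (ZMod p))) : Prop :=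
  g ∈ AutT (ZMod p) ∧ (∀ x, g [x] = [x + rootShift g]) ∧
    ∀ x y, g [x, y] = [x + rootShift g, y + childShift g x]

namespace IsTwoLevelShift

variable {f g : Equiv.Perm (List (ZMod p))}

lemma mem_autT (hg : IsTwoLevelShift g) : g ∈ AutT (ZMod p) := hg.1

lemma apply_singleton (hg : IsTwoLevelShift g) (x : ZMod p) : g [x] = [x + rootShift g] :=
  hg.2.1 x

lemma apply_pair (hg : IsTwoLevelShift g) (x y : ZMod p) :
    g [x, y] = [x + rootShift g, y + childShift g x] :=
  hg.2.2 x y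

lemma one : IsTwoLevelShift (1 : Equiv.Perm (List (ZMod p))) :=
  ⟨one_mem _, fun x => by simp [rootShift], fun x y => by simp [rootShift, childShift]⟩

lemma rootShift_mul (hf : IsTwoLevelShift f) (hg : IsTwoLevelShift g) :
    rootShift (f * g) = rootShift f + rootShift g := by
  show (f (g [0])).headI = _
  rw [hg.apply_singleton, hf.apply_singleton, zero_add, List.headI_cons, add_comm]

lemma childShift_mul (hf : IsTwoLevelShift f) (hg : IsTwoLevelShift g) (x : ZMod p) :
    childShift (f * g) x = childShift f (x + rootShift g) + childShift g x := by
  show (f (g [x, 0])).getLastD 0 = _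
  rw [hg.apply_pair, hf.apply_pair, zero_add]
  exact add_comm _ _

lemma mul (hf : IsTwoLevelShift f) (hg : IsTwoLevelShift g) : IsTwoLevelShift (f * g) := by
  refine ⟨mul_mem hf.mem_autT hg.mem_autT, fun x => ?_, fun x y => ?_⟩
  · rw [Equiv.Perm.mul_apply, hg.apply_singleton, hf.apply_singleton, rootShift_mul hf hg]
    ring_nf
  · rw [Equiv.Perm.mul_apply, hg.apply_pair, hf.apply_pair, rootShift_mul hf hg,
      childShift_mul hf hg]
    ring_nf

lemma inv_apply_singleton (hg : IsTwoLevelShift g) (x : ZMod p) :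
    g⁻¹ [x] = [x - rootShift g] := by
  rw [Equiv.Perm.inv_eq_iff_eq, hg.apply_singleton, sub_add_cancel]

lemma inv_apply_pair (hg : IsTwoLevelShift g) (x y : ZMod p) :
    g⁻¹ [x, y] = [x - rootShift g, y - childShift g (x - rootShift g)] := by
  rw [Equiv.Perm.inv_eq_iff_eq, hg.apply_pair, sub_add_cancel, sub_add_cancel]

lemma rootShift_inv (hg : IsTwoLevelShift g) : rootShift g⁻¹ = -rootShift g := by
  show (g⁻¹ [0]).headI = _
  rw [hg.inv_apply_singleton, zero_sub, List.headI_cons]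

lemma childShift_inv (hg : IsTwoLevelShift g) (x : ZMod p) :
    childShift g⁻¹ x = -childShift g (x - rootShift g) := by
  show (g⁻¹ [x, 0]).getLastD 0 = _
  rw [hg.inv_apply_pair, zero_sub]
  rfl

lemma inv (hg : IsTwoLevelShift g) : IsTwoLevelShift g⁻¹ := by
  refine ⟨inv_mem hg.mem_autT, fun x => ?_, fun x y => ?_⟩
  · rw [hg.inv_apply_singleton, hg.rootShift_inv, sub_eq_add_neg]
  · rw [hg.inv_apply_pair, hg.rootShift_inv, hg.childShift_inv, sub_eq_add_neg, sub_eq_add_neg]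

lemma rootShift_sect (hg : IsTwoLevelShift g) (x : ZMod p) :
    rootShift (sect g [x]) = childShift g x := by
  show (sect g [x] [0]).headI = _
  rw [sect_apply hg.mem_autT, List.singleton_append, hg.apply_pair, hg.apply_singleton]
  simp

lemma commutator_apply_pair (hf : IsTwoLevelShift f) (hg : IsTwoLevelShift g)
    (hf₀ : rootShift f = 0) (hg₀ : rootShift g = 0) (x y : ZMod p) :
    (f * g * f⁻¹ * g⁻¹) [x, y] = [x, y] := by
  have hfg := hf.mul hg
  have hfgf := hfg.mul hf.inv
  rw [hfgf.mul hg.inv |>.apply_pair, rootShift_mul hfgf hg.inv,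
    rootShift_mul hfg hf.inv, rootShift_mul hf hg, childShift_mul hfgf hg.inv,
    childShift_mul hfg hf.inv, childShift_mul hf hg, hf.rootShift_inv, hg.rootShift_inv,
    hf.childShift_inv, hg.childShift_inv, hf₀, hg₀]
  simp

end IsTwoLevelShift

end TwoLevelShift

section GeneratorShifts

variable {p : ℕ}

lemma rootShift_rotPerm (m : ZMod p) : rootShift (rotPerm m) = m := zero_add m

lemma childShift_rotPerm (m x : ZMod p) : childShift (rotPerm m) x = 0 := rfl

lemma isTwoLevelShift_rotPerm (m : ZMod p) : IsTwoLevelShift (rotPerm m) :=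
  ⟨rotPerm_mem_autT m, fun x => by simp [rootShift_rotPerm],
    fun x y => by simp [rootShift_rotPerm, childShift_rotPerm]⟩

lemma rootShift_ggsB (e : ZMod p → ZMod p) : rootShift (ggsB e) = 0 := by
  simp [rootShift]

lemma childShift_ggsB (e : ZMod p → ZMod p) (x : ZMod p) :
    childShift (ggsB e) x = if x = 0 then 0 else e x := by
  by_cases hx : x = 0 <;> simp [childShift, hx, ggsB_cons_of_ne_zero]

lemma isTwoLevelShift_ggsB (e : ZMod p → ZMod p) : IsTwoLevelShift (ggsB e) := by
  refine ⟨ggsB_mem_autT e, fun x => ?_, fun x y => ?_⟩ <;>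
    by_cases hx : x = 0 <;> simp [rootShift_ggsB, childShift_ggsB, hx, ggsB_cons_of_ne_zero]
  by_cases hy : y = 0 <;> simp [hy, ggsB_cons_of_ne_zero]

lemma isTwoLevelShift_of_mem_ggsGroup (e : ZMod p → ZMod p) {g : Equiv.Perm (List (ZMod p))}
    (hg : g ∈ ggsGroup p e) : IsTwoLevelShift g := by
  induction hg using Subgroup.closure_induction with
  | mem g hg =>
    obtain rfl | rfl := hg
    exacts [isTwoLevelShift_rotPerm 1, isTwoLevelShift_ggsB e]
  | one => exact .one
  | mul f g _ _ hf hg => exact hf.mul hg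
  | inv g _ hg => exact hg.inv

end GeneratorShifts

section Sigma

variable {p : ℕ} [NeZero p]

def childShiftSum (g : Equiv.Perm (List (ZMod p))) : ZMod p := ∑ x, childShift g x

/-- On the GGS-group with constant defining vector this is the homomorphism counting the
exponents of `a` and of `b` modulo `p` together: it sends both `a` and `b` to `1`. -/
def sigma (g : Equiv.Perm (List (ZMod p))) : ZMod p := rootShift g - childShiftSum g

lemma childShiftSum_one : childShiftSum (1 : Equiv.Perm (List (ZMod p))) = 0 :=
  Finset.sum_eq_zero fun _ _ => rfl

lemma sigma_one : sigma (1 : Equiv.Perm (List (ZMod p))) = 0 := by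
  simp [sigma, rootShift, childShiftSum_one]

namespace IsTwoLevelShift

variable {f g : Equiv.Perm (List (ZMod p))}

lemma childShiftSum_mul (hf : IsTwoLevelShift f) (hg : IsTwoLevelShift g) :
    childShiftSum (f * g) = childShiftSum f + childShiftSum g := by
  simp only [childShiftSum, childShift_mul hf hg, Finset.sum_add_distrib]
  congr 1
  exact Fintype.sum_equiv (Equiv.addRight (rootShift g)) _ _ fun _ => rfl

lemma childShiftSum_inv (hg : IsTwoLevelShift g) : childShiftSum g⁻¹ = -childShiftSum g := by
  have h := childShiftSum_mul hg.inv hg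
  rw [inv_mul_cancel, childShiftSum_one] at h
  linear_combination -h

lemma sigma_mul (hf : IsTwoLevelShift f) (hg : IsTwoLevelShift g) :
    sigma (f * g) = sigma f + sigma g := by
  rw [sigma, sigma, sigma, rootShift_mul hf hg, childShiftSum_mul hf hg]
  ring

lemma sigma_inv (hg : IsTwoLevelShift g) : sigma g⁻¹ = -sigma g := by
  rw [sigma, sigma, hg.rootShift_inv, hg.childShiftSum_inv]
  ring

end IsTwoLevelShift

lemma sigma_rotPerm (m : ZMod p) : sigma (rotPerm m) = m := by
  simp [sigma, childShiftSum, rootShift_rotPerm, childShift_rotPerm]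

lemma childShiftSum_ggsB_one : childShiftSum (ggsB fun _ => (1 : ZMod p)) = -1 := by
  simp only [childShiftSum, childShift_ggsB, Finset.sum_ite, Finset.sum_const_zero,
    Finset.filter_ne', Finset.sum_const, Finset.mem_univ, Finset.card_erase_of_mem,
    Finset.card_univ, ZMod.card, nsmul_eq_mul, mul_one, zero_add]
  rw [Nat.cast_sub NeZero.one_le, ZMod.natCast_self, Nat.cast_one, zero_sub]

lemma sigma_ggsB_one : sigma (ggsB fun _ => (1 : ZMod p)) = 1 := by
  rw [sigma, rootShift_ggsB, childShiftSum_ggsB_one, zero_sub, neg_neg]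

end Sigma

section ConstantVector

variable {p : ℕ}

local notation "𝐚" => rotPerm (1 : ZMod p)
local notation "𝐛" => ggsB fun _ => (1 : ZMod p)
local notation "𝒢" => ggsGroup p fun _ => (1 : ZMod p)
local notation "𝒩" => normalClosureIn 𝒢 {𝐚 * 𝐛⁻¹}

lemma ab_inv_mem_ggsGroup : 𝐚 * 𝐛⁻¹ ∈ 𝒢 :=
  mul_mem (rotPerm_one_mem_ggsGroup _) (inv_mem (ggsB_mem_ggsGroup _))

lemma normalClosureIn_le_ggsGroup : 𝒩 ≤ 𝒢 :=
  normalClosureIn_le (Set.singleton_subset_iff.mpr ab_inv_mem_ggsGroup)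

section Lifts

variable (p) in
def liftA : Equiv.Perm (List (ZMod p)) := 𝐚 * 𝐛 * 𝐚⁻¹

variable (p) in
def liftB : Equiv.Perm (List (ZMod p)) := 𝐛 * liftA p * 𝐛⁻¹

lemma liftA_mem_ggsGroup : liftA p ∈ 𝒢 :=
  mul_mem (mul_mem (rotPerm_one_mem_ggsGroup _) (ggsB_mem_ggsGroup _))
    (inv_mem (rotPerm_one_mem_ggsGroup _))

lemma liftB_mem_ggsGroup : liftB p ∈ 𝒢 :=
  mul_mem (mul_mem (ggsB_mem_ggsGroup _) liftA_mem_ggsGroup) (inv_mem (ggsB_mem_ggsGroup _))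

/-- `liftA * liftB⁻¹` is the commutator of `liftA` and `𝐛`, two elements acting trivially on the
first level; such elements commute on the second level. -/
lemma liftA_mul_liftB_inv_mem_stL : liftA p * (liftB p)⁻¹ ∈ stL 𝒢 2 := by
  refine ⟨mul_mem liftA_mem_ggsGroup (inv_mem liftB_mem_ggsGroup), fun u hu => ?_⟩
  obtain ⟨x, y, rfl⟩ := List.length_eq_two.mp hu
  have ha := isTwoLevelShift_rotPerm (1 : ZMod p)
  have hb := isTwoLevelShift_ggsB fun _ => (1 : ZMod p)
  have hA := isTwoLevelShift_of_mem_ggsGroup _ (liftA_mem_ggsGroup (p := p))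
  have hA₀ : rootShift (liftA p) = 0 := by
    rw [liftA, (ha.mul hb).rootShift_mul ha.inv, ha.rootShift_mul hb, ha.rootShift_inv,
      rootShift_rotPerm, rootShift_ggsB]
    ring
  have hcomm : liftA p * (liftB p)⁻¹ = liftA p * 𝐛 * (liftA p)⁻¹ * 𝐛⁻¹ := by
    simp only [liftB, mul_inv_rev, inv_inv, mul_assoc]
  rw [hcomm]
  exact hA.commutator_apply_pair hb hA₀ (rootShift_ggsB _) x y

variable [Fact (1 < p)]

lemma liftA_apply (v : List (ZMod p)) : liftA p (1 :: 1 :: v) = 1 :: 1 :: 𝐚 v := by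
  simp [liftA, rotPerm_inv, ggsB_cons_of_ne_zero]

lemma liftB_apply (v : List (ZMod p)) : liftB p (1 :: 1 :: v) = 1 :: 1 :: 𝐛 v := by
  simp [liftB, liftA, rotPerm_inv, ggsB_inv, ggsB_cons_of_ne_zero]

lemma liftA_fix : liftA p [1, 1] = [1, 1] := by simpa using liftA_apply (p := p) []

lemma liftB_fix : liftB p [1, 1] = [1, 1] := by simpa using liftB_apply (p := p) []

lemma sect_liftA : sect (liftA p) [1, 1] = 𝐚 :=
  sect_eq_of_apply_append (ggsGroup_le_autT _ liftA_mem_ggsGroup) liftA_fix liftA_apply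

lemma sect_liftB : sect (liftB p) [1, 1] = 𝐛 :=
  sect_eq_of_apply_append (ggsGroup_le_autT _ liftB_mem_ggsGroup) liftB_fix liftB_apply

lemma sect_liftA_mul_liftB_inv : sect (liftA p * (liftB p)⁻¹) [1, 1] = 𝐚 * 𝐛⁻¹ := by
  have hB := ggsGroup_le_autT _ (liftB_mem_ggsGroup (p := p))
  rw [sect_mul (ggsGroup_le_autT _ liftA_mem_ggsGroup) (inv_mem hB),
    Equiv.Perm.inv_eq_iff_eq.mpr liftB_fix.symm, sect_inv hB liftB_fix, sect_liftA, sect_liftB]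

lemma normalClosureIn_le_sectStLImage : 𝒩 ≤ sectStLImage 𝒢 (ggsGroup_le_autT _) [1, 1] := by
  refine normalClosureIn_le_of_le_normalizer (Set.singleton_subset_iff.mpr
    ⟨_, liftA_mul_liftB_inv_mem_stL, sect_liftA_mul_liftB_inv⟩) ?_
  refine (Subgroup.closure_le _).mpr ?_
  rintro _ (rfl | rfl)
  · simpa [sect_liftA] using
      sect_mem_normalizer_sectStLImage (ggsGroup_le_autT _) liftA_mem_ggsGroup (liftA_fix (p := p))
  · simpa [sect_liftB] using
      sect_mem_normalizer_sectStLImage (ggsGroup_le_autT _) liftB_mem_ggsGroup (liftB_fix (p := p))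

end Lifts

section Kernel

variable [NeZero p]

lemma sigma_sect_singleton {g : Equiv.Perm (List (ZMod p))} (hg : g ∈ 𝒢) (x : ZMod p) :
    sigma (sect g [x]) = -childShiftSum g := by
  have hsect {g} (hg : g ∈ 𝒢) (x) := isTwoLevelShift_of_mem_ggsGroup _
    (sect_singleton_mem_ggsGroup _ hg x)
  induction hg using Subgroup.closure_induction generalizing x with
  | mem g hg =>
    obtain rfl | rfl := hg
    · simp [sect_rotPerm, sigma_one, childShiftSum, childShift_rotPerm]
    · by_cases hx : x = 0
      · rw [hx, sect_ggsB_zero, sigma_ggsB_one, childShiftSum_ggsB_one, neg_neg]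
      · rw [sect_ggsB_of_ne_zero _ hx, sigma_rotPerm, childShiftSum_ggsB_one, neg_neg]
  | one => simp [sect_one, sigma_one, childShiftSum_one]
  | mul f g hf hg ihf ihg =>
    have hf' := isTwoLevelShift_of_mem_ggsGroup _ hf
    have hg' := isTwoLevelShift_of_mem_ggsGroup _ hg
    rw [sect_mul hf'.mem_autT hg'.mem_autT, hg'.apply_singleton,
      (hsect hf _).sigma_mul (hsect hg x), ihf, ihg, hf'.childShiftSum_mul hg']
    ring
  | inv g hg ihg =>
    have hg' := isTwoLevelShift_of_mem_ggsGroup _ hg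
    rw [sect_inv_eq hg'.mem_autT, hg'.inv_apply_singleton, (hsect hg _).sigma_inv, ihg,
      hg'.childShiftSum_inv]

lemma sigma_eq_zero_of_mem_normalClosureIn {n : Equiv.Perm (List (ZMod p))} (hn : n ∈ 𝒩) :
    sigma n = 0 := by
  have hmem {g} (hg : g ∈ 𝒩) := isTwoLevelShift_of_mem_ggsGroup _ (normalClosureIn_le_ggsGroup hg)
  induction hn using Subgroup.closure_induction with
  | mem x hx =>
    obtain ⟨g, hg, s, rfl, rfl⟩ := hx
    have hg' := isTwoLevelShift_of_mem_ggsGroup _ hg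
    have ha := isTwoLevelShift_rotPerm (1 : ZMod p)
    have hb := isTwoLevelShift_ggsB fun _ => (1 : ZMod p)
    rw [((hg'.mul (ha.mul hb.inv)).sigma_mul hg'.inv), hg'.sigma_mul (ha.mul hb.inv),
      ha.sigma_mul hb.inv, hb.sigma_inv, hg'.sigma_inv, sigma_rotPerm, sigma_ggsB_one]
    ring
  | one => exact sigma_one
  | mul x y hx hy ihx ihy => rw [(hmem hx).sigma_mul (hmem hy), ihx, ihy, add_zero]
  | inv x hx ihx => rw [(hmem hx).sigma_inv, ihx, neg_zero]

lemma exists_mul_zpow_mem_normalClosureIn {g : Equiv.Perm (List (ZMod p))} (hg : g ∈ 𝒢) :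
    ∃ k : ℤ, (k : ZMod p) = sigma g ∧ g * 𝐚 ^ (-k) ∈ 𝒩 := by
  induction hg using Subgroup.closure_induction with
  | mem g hg =>
    refine ⟨1, ?_, ?_⟩ <;> obtain rfl | rfl := hg
    · rw [sigma_rotPerm, Int.cast_one]
    · rw [sigma_ggsB_one, Int.cast_one]
    · simp [one_mem]
    · simpa using inv_mem (subset_normalClosureIn _ (Set.mem_singleton (𝐚 * 𝐛⁻¹)))
  | one => exact ⟨0, by rw [sigma_one, Int.cast_zero], by simp [one_mem]⟩
  | mul f g hf hg ihf ihg =>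
    obtain ⟨k, hk, hfk⟩ := ihf
    obtain ⟨l, hl, hgl⟩ := ihg
    refine ⟨k + l, ?_, ?_⟩
    · rw [Int.cast_add, hk, hl, (isTwoLevelShift_of_mem_ggsGroup _ hf).sigma_mul
        (isTwoLevelShift_of_mem_ggsGroup _ hg)]
    · have h : f * g * 𝐚 ^ (-(k + l)) = f * (g * 𝐚 ^ (-l)) * f⁻¹ * (f * 𝐚 ^ (-k)) := by group
      rw [h]
      exact mul_mem (conj_mem_normalClosureIn hf hgl) hfk
  | inv g hg ihg =>
    obtain ⟨k, hk, hgk⟩ := ihg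
    refine ⟨-k, ?_, ?_⟩
    · rw [Int.cast_neg, hk, (isTwoLevelShift_of_mem_ggsGroup _ hg).sigma_inv]
    · have h : g⁻¹ * 𝐚 ^ (-(-k)) = g⁻¹ * (g * 𝐚 ^ (-k))⁻¹ * g⁻¹⁻¹ := by group
      rw [h]
      exact conj_mem_normalClosureIn (inv_mem hg) (inv_mem hgk)

lemma mem_normalClosureIn_of_sigma_eq_zero {g : Equiv.Perm (List (ZMod p))} (hg : g ∈ 𝒢)
    (h₀ : sigma g = 0) : g ∈ 𝒩 := by
  obtain ⟨k, hk, hgk⟩ := exists_mul_zpow_mem_normalClosureIn hg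
  rwa [rotPerm_one_zpow, Int.cast_neg, hk, h₀, neg_zero, rotPerm_zero, mul_one] at hgk

lemma sect_mem_normalClosureIn_of_mem_stL_two {h : Equiv.Perm (List (ZMod p))}
    (hh : h ∈ stL 𝒢 2) : sect h [1, 1] ∈ 𝒩 := by
  obtain ⟨hG, hfix⟩ := hh
  have hh' := isTwoLevelShift_of_mem_ggsGroup _ hG
  have hchild (x : ZMod p) : childShift h x = 0 := by
    have hx := (hh'.apply_pair x 0).symm.trans (hfix [x, 0] rfl)
    simp only [List.cons.injEq, zero_add, and_true] at hx
    exact hx.2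
  have h₁ : sect h [1] ∈ 𝒢 := ggsGroup_selfSimilar _ h hG [1]
  have hsum : childShiftSum (sect h [1]) = 0 := by
    have hσ := sigma_sect_singleton hG 1
    have hsumh : childShiftSum h = 0 := Finset.sum_eq_zero fun x _ => hchild x
    rwa [sigma, hh'.rootShift_sect, hchild, hsumh, zero_sub, neg_zero, neg_eq_zero] at hσ
  refine mem_normalClosureIn_of_sigma_eq_zero (ggsGroup_selfSimilar _ h hG _) ?_
  rw [show ([1, 1] : List (ZMod p)) = [1] ++ [1] from rfl, sect_append hh'.mem_autT,
    sigma_sect_singleton h₁, hsum, neg_zero]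

lemma normalClosureIn_lt_ggsGroup [Fact (1 < p)] : 𝒩 < 𝒢 := by
  refine SetLike.lt_iff_le_and_exists.mpr
    ⟨normalClosureIn_le_ggsGroup, 𝐚, rotPerm_one_mem_ggsGroup _, fun ha => ?_⟩
  have h := sigma_eq_zero_of_mem_normalClosureIn ha
  rw [sigma_rotPerm] at h
  exact one_ne_zero h

end Kernel

end ConstantVector

/-- For the GGS-group `G` with constant defining vector `(1, …, 1)`
and the second-level vertex `u = x_1 x_1`, the image `ψ_u(st_G(L_2))` equals the normal
closure `⟨b⁻¹a⟩^G`, which is a proper subgroup of `G`. -/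
theorem ggsGroup_constant_sect_stL_two (p : ℕ) [Fact p.Prime] :
    (fun g => sect g [(1 : ZMod p), 1]) ''
        (stL (ggsGroup p (fun _ => 1)) 2 : Set (Equiv.Perm (List (ZMod p)))) =
      (normalClosureIn (ggsGroup p (fun _ => 1)) {rotPerm 1 * (ggsB (fun _ => 1))⁻¹} :
        Set (Equiv.Perm (List (ZMod p)))) ∧
    normalClosureIn (ggsGroup p (fun _ => 1)) {rotPerm 1 * (ggsB (fun _ => 1))⁻¹}
      < ggsGroup p (fun _ => 1) := by
  refine ⟨Set.Subset.antisymm ?_ fun t ht => normalClosureIn_le_sectStLImage ht,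
    normalClosureIn_lt_ggsGroup⟩
  rintro _ ⟨h, hh, rfl⟩
  exact sect_mem_normalClosureIn_of_mem_stL_two hh

end TreeFract
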